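/- Let G be a graph and let m denote the number of ordered edges of G (i.e., m = 2|E(G)|). For every even k ≥ 4, the number of copies of the k-cycle C_k in G is at most m^{k/2}. -/

import Mathlib

/-!
Each copy of `C_k` is the image of an injective homomorphism `f : C_k → G`, and `f` is
determined by the `k / 2` ordered edges `(f (2i), f (2i + 1))` of `G`, which cover all
vertices of `C_k` because `k` is even. Hence there are at most `m ^ (k / 2)` such `f`.
-/

open Finset

namespace SimpleGraph

variable {V α ι : Type*}

theorem card_subgraph_iso_eq_copyCount [Fintype V] (G : SimpleGraph V) (A : SimpleGraph α) :
    Nat.card {H : G.Subgraph // Nonempty (H.coe ≃g A)} = G.copyCount A := by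
  classical
  rw [copyCount, Nat.card_eq_fintype_card, Fintype.card_subtype]
  congr 1
  ext H
  simp only [mem_filter, mem_univ, true_and]
  exact ⟨fun ⟨e⟩ ↦ ⟨e.symm⟩, fun ⟨e⟩ ↦ ⟨e.symm⟩⟩

theorem labelledCopyCount_le_card_dart_pow [Fintype V] [DecidableEq V] [Fintype α] [Fintype ι]
    (G : SimpleGraph V) [DecidableRel G.Adj] {A : SimpleGraph α} (d : ι → A.Dart)
    (hd : ∀ a, ∃ i, (d i).fst = a ∨ (d i).snd = a) :
    G.labelledCopyCount A ≤ Fintype.card G.Dart ^ Fintype.card ι := by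
  have hcard : G.labelledCopyCount A = Nat.card (A.Copy G) := by
    rw [labelledCopyCount]
    convert Nat.card_eq_fintype_card.symm
  rw [hcard, ← Nat.card_eq_fintype_card, ← Nat.card_eq_fintype_card, ← Nat.card_fun]
  refine Nat.card_le_card_of_injective (fun f i ↦ f.toHom.mapDart (d i)) fun f g hfg ↦ ?_
  ext a
  obtain ⟨i, hi | hi⟩ := hd a <;> subst hi
  · exact congrArg (·.fst) (congrFun hfg i)
  · exact congrArg (·.snd) (congrFun hfg i)

theorem cycleGraph_adj_of_val_eq_succ {k : ℕ} {a b : Fin k} (h : b.val = a.val + 1) :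
    (cycleGraph k).Adj a b := by
  rw [cycleGraph_adj']
  right
  rw [Fin.sub_val_of_le (Fin.le_iff_val_le_val.2 (by omega))]
  omega

def cycleGraph.evenOddDart (k : ℕ) (i : Fin (k / 2)) : (cycleGraph k).Dart :=
  ⟨(⟨2 * i, by omega⟩, ⟨2 * i + 1, by omega⟩), cycleGraph_adj_of_val_eq_succ rfl⟩

theorem cycleGraph.evenOddDart_cover {k : ℕ} (hk : Even k) (a : Fin k) :
    ∃ i, (evenOddDart k i).fst = a ∨ (evenOddDart k i).snd = a := by
  refine ⟨⟨a / 2, by grind⟩, ?_⟩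
  simp only [evenOddDart, Fin.ext_iff]
  omega

end SimpleGraph

open SimpleGraph in
theorem stmt_3_general {V : Type*} [Fintype V] [DecidableEq V]
    (G : SimpleGraph V) [DecidableRel G.Adj]
    (k : ℕ) (hkeven : Even k)
    (m : ℕ) (hm : m = 2 * G.edgeFinset.card) :
    Nat.card {H : G.Subgraph // Nonempty (H.coe ≃g SimpleGraph.cycleGraph k)} ≤
      m ^ (k / 2) :=
  calc Nat.card {H : G.Subgraph // Nonempty (H.coe ≃g SimpleGraph.cycleGraph k)}
      _ = G.copyCount (cycleGraph k) := card_subgraph_iso_eq_copyCount G _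
      _ ≤ G.labelledCopyCount (cycleGraph k) := copyCount_le_labelledCopyCount
      _ ≤ Fintype.card G.Dart ^ Fintype.card (Fin (k / 2)) :=
        labelledCopyCount_le_card_dart_pow G _ (cycleGraph.evenOddDart_cover hkeven)
      _ = m ^ (k / 2) := by rw [dart_card_eq_twice_card_edges, Fintype.card_fin, hm]

/-- Let `G` be a graph with `m` ordered edges (`m = 2|E(G)|`).  For every even
`k ≥ 4`, the number of copies of the `k`-cycle `C_k` in `G` (subgraphs of `G`
isomorphic to the cycle on `k` vertices) is at most `m^(k/2)`. -/
theorem stmt_3 {V : Type*} [Fintype V] [DecidableEq V]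
    (G : SimpleGraph V) [DecidableRel G.Adj]
    (k : ℕ) (hk : 4 ≤ k) (hkeven : Even k)
    (m : ℕ) (hm : m = 2 * G.edgeFinset.card) :
    Nat.card {H : G.Subgraph // Nonempty (H.coe ≃g SimpleGraph.cycleGraph k)} ≤
      m ^ (k / 2) :=
  stmt_3_general G k hkeven m hm
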